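/- For every steplength γ > 0 and every j ≥ 0, the AsyRK iterates satisfy 𝔼(‖Ax_{j+1} − b‖²) ≥ (1 − γλ_max/m) 𝔼(‖Ax_j − b‖²) − (γλ_max/m) 𝔼(‖Ax_{k(j)} − b‖²). -/

import Mathlib

open MeasureTheory ProbabilityTheory Matrix Finset
open scoped Classical

/-! Write `r = A x - b`. An AsyRK step moves `x_j` along one coordinate `t`, hence moves the
residual along the column `A e_t`: `r_{j+1} = r_j - δ A e_t`, so that
`‖r_{j+1}‖² ≥ ‖r_j‖² - 2 δ ⟪A e_t, r_j⟫`. The iterates `x_j` and `x_{k(j)}` are functions of the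
indices drawn before step `j`, hence independent of `(i_j, t_j)`; averaging over the sampling
distribution, the cross term becomes `(2γ/m) ⟪Aᵀ r_{k(j)}, Aᵀ r_j⟫`, which is at most
`(γ/m) (‖Aᵀ r_j‖² + ‖Aᵀ r_{k(j)}‖²) ≤ (γ λ_max / m) (‖r_j‖² + ‖r_{k(j)}‖²)`. -/

namespace Matrix

variable {ι κ : Type*} [Fintype ι] [Fintype κ]

theorem IsHermitian.dotProduct_mulVec_le {B : Matrix κ κ ℝ} (hB : B.IsHermitian) {c : ℝ}
    (hc : c ∈ upperBounds {μ | ∃ v : κ → ℝ, v ≠ 0 ∧ B *ᵥ v = μ • v}) (v : κ → ℝ) :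
    v ⬝ᵥ B *ᵥ v ≤ c * (v ⬝ᵥ v) := by
  have hC : (c • 1 - B).IsHermitian := (isHermitian_one.smul (IsSelfAdjoint.all c)).sub hB
  have hpsd : (c • 1 - B).PosSemidef := by
    refine hC.posSemidef_iff_eigenvalues_nonneg.mpr fun i => ?_
    set e : κ → ℝ := ⇑(hC.eigenvectorBasis i)
    have he : e ≠ 0 := fun h =>
      hC.eigenvectorBasis.orthonormal.ne_zero i (WithLp.ofLp_injective 2 h)
    have hBe : B *ᵥ e = (c - hC.eigenvalues i) • e := by
      have := hC.mulVec_eigenvectorBasis i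
      rw [sub_mulVec, smul_mulVec, one_mulVec] at this
      rw [sub_smul, ← this]
      abel
    simpa using hc ⟨e, he, hBe⟩
  have := hpsd.dotProduct_mulVec_nonneg v
  simp only [star_trivial, sub_mulVec, smul_mulVec, one_mulVec, dotProduct_sub, dotProduct_smul,
    smul_eq_mul] at this
  linarith

theorem dotProduct_sub_smul_self_ge (r w : κ → ℝ) (δ : ℝ) :
    r ⬝ᵥ r - 2 * δ * (w ⬝ᵥ r) ≤ (r - δ • w) ⬝ᵥ (r - δ • w) := by
  have hw : 0 ≤ w ⬝ᵥ w := by simpa using dotProduct_self_star_nonneg w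
  simp only [sub_dotProduct, dotProduct_sub, smul_dotProduct, dotProduct_smul, smul_eq_mul,
    dotProduct_comm r w]
  nlinarith [mul_nonneg (sq_nonneg δ) hw]

variable {A : Matrix ι κ ℝ} {c : ℝ}

theorem dotProduct_transpose_mul_self_mulVec (v : κ → ℝ) :
    v ⬝ᵥ (Aᵀ * A) *ᵥ v = (A *ᵥ v) ⬝ᵥ (A *ᵥ v) := by
  rw [← mulVec_mulVec, dotProduct_mulVec, ← mulVec_transpose, transpose_transpose]

theorem nonneg_of_mem_transpose_mul_self_eigenvalues {μ : ℝ}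
    (hμ : μ ∈ {μ | ∃ v : κ → ℝ, v ≠ 0 ∧ (Aᵀ * A) *ᵥ v = μ • v}) : 0 ≤ μ := by
  obtain ⟨v, hv, h⟩ := hμ
  have hvv : 0 < v ⬝ᵥ v := by simpa using dotProduct_star_self_pos_iff.mpr hv
  have hAv : 0 ≤ (A *ᵥ v) ⬝ᵥ (A *ᵥ v) := by simpa using dotProduct_self_star_nonneg (A *ᵥ v)
  rw [← dotProduct_transpose_mul_self_mulVec, h, dotProduct_smul, smul_eq_mul] at hAv
  exact nonneg_of_mul_nonneg_left hAv hvv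

/-- `A Aᵀ` and `Aᵀ A` have the same nonzero eigenvalues. -/
theorem mem_upperBounds_mul_transpose_eigenvalues (hc0 : 0 ≤ c)
    (hc : c ∈ upperBounds {μ | ∃ v : κ → ℝ, v ≠ 0 ∧ (Aᵀ * A) *ᵥ v = μ • v}) :
    c ∈ upperBounds {μ | ∃ v : ι → ℝ, v ≠ 0 ∧ (A * Aᵀ) *ᵥ v = μ • v} := by
  rintro μ ⟨v, hv, hAv⟩
  rcases eq_or_ne μ 0 with rfl | hμ
  · exact hc0
  rw [← mulVec_mulVec] at hAv
  refine hc ⟨Aᵀ *ᵥ v, fun h => ?_, ?_⟩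
  · rw [h, mulVec_zero, eq_comm, smul_eq_zero] at hAv
    exact hAv.elim hμ hv
  · rw [← mulVec_mulVec, hAv, mulVec_smul]

theorem transpose_mulVec_dotProduct_self_le (hc0 : 0 ≤ c)
    (hc : c ∈ upperBounds {μ | ∃ v : κ → ℝ, v ≠ 0 ∧ (Aᵀ * A) *ᵥ v = μ • v}) (w : ι → ℝ) :
    (Aᵀ *ᵥ w) ⬝ᵥ (Aᵀ *ᵥ w) ≤ c * (w ⬝ᵥ w) := by
  have h := (isHermitian_mul_conjTranspose_self A).dotProduct_mulVec_le
    (mem_upperBounds_mul_transpose_eigenvalues hc0 hc) w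
  rw [conjTranspose_eq_transpose_of_trivial] at h
  rwa [← dotProduct_transpose_mul_self_mulVec, transpose_transpose]

end Matrix

section AsyRK

variable {ι κ : Type*} [Fintype κ]

def asyrkStepSize (A : Matrix ι κ ℝ) (b : ι → ℝ) (θ : ι → ℕ) (γ : ℝ) (v : κ → ℝ)
    (p : ι × κ) : ℝ :=
  γ * θ p.1 * A p.1 p.2 * (A p.1 ⬝ᵥ v - b p.1)

def asyrkStep [DecidableEq κ] (A : Matrix ι κ ℝ) (b : ι → ℝ) (θ : ι → ℕ) (γ : ℝ)
    (u v : κ → ℝ) (p : ι × κ) : κ → ℝ :=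
  u - Pi.single p.2 (asyrkStepSize A b θ γ v p)

variable {A : Matrix ι κ ℝ} {b : ι → ℝ} {θ : ι → ℕ} {γ : ℝ}

theorem mulVec_asyrkStep_sub [DecidableEq κ] (u v : κ → ℝ) (p : ι × κ) :
    A *ᵥ asyrkStep A b θ γ u v p - b = (A *ᵥ u - b) - asyrkStepSize A b θ γ v p • Aᵀ p.2 := by
  ext i
  simp only [asyrkStep, mulVec_sub, Pi.sub_apply, Pi.smul_apply, transpose_apply, smul_eq_mul]
  simp only [mulVec, dotProduct_single]
  ring

/-- The factor `θ i` in the step size cancels the sampling probability `(m θ i)⁻¹`. -/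
theorem sum_mul_asyrkStepSize_mul [Fintype ι] (hθ : ∀ i, θ i = #{t | A i t ≠ 0})
    {π : ι × κ → ℝ}
    (hπ : ∀ p, π p = if A p.1 p.2 ≠ 0 then ((Fintype.card ι : ℝ) * θ p.1)⁻¹ else 0)
    (v : κ → ℝ) (r : ι → ℝ) :
    ∑ p, π p * asyrkStepSize A b θ γ v p * (Aᵀ *ᵥ r) p.2 =
      γ / Fintype.card ι * ((Aᵀ *ᵥ (A *ᵥ v - b)) ⬝ᵥ (Aᵀ *ᵥ r)) := by
  have hweight : ∀ i t, π (i, t) * θ i * A i t = A i t / Fintype.card ι := by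
    intro i t
    rw [hπ]
    split_ifs with h
    · have : θ i ≠ 0 := by
        rw [hθ]
        exact card_ne_zero.2 ⟨t, by simpa using h⟩
      field_simp
    · simp_all
  calc ∑ p, π p * asyrkStepSize A b θ γ v p * (Aᵀ *ᵥ r) p.2
      = ∑ p, γ / Fintype.card ι * (A p.1 p.2 * (A p.1 ⬝ᵥ v - b p.1) * (Aᵀ *ᵥ r) p.2) :=
        sum_congr rfl fun p _ => by
          rw [asyrkStepSize]
          linear_combination γ * (A p.1 ⬝ᵥ v - b p.1) * (Aᵀ *ᵥ r) p.2 * hweight p.1 p.2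
    _ = γ / Fintype.card ι * ((Aᵀ *ᵥ (A *ᵥ v - b)) ⬝ᵥ (Aᵀ *ᵥ r)) := by
      rw [← mul_sum, Fintype.sum_prod_type, sum_comm]
      simp only [dotProduct, mulVec, transpose_apply, sum_mul, Pi.sub_apply]

theorem le_sum_mul_asyrkStep [Fintype ι] [DecidableEq κ] (hγ : 0 ≤ γ) {lam : ℝ}
    (hlam : IsGreatest {μ | ∃ v : κ → ℝ, v ≠ 0 ∧ (Aᵀ * A) *ᵥ v = μ • v} lam)
    (hθ : ∀ i, θ i = #{t | A i t ≠ 0}) {π : ι × κ → ℝ} (hπ0 : ∀ p, 0 ≤ π p)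
    (hπ1 : ∑ p, π p = 1)
    (hπ : ∀ p, π p = if A p.1 p.2 ≠ 0 then ((Fintype.card ι : ℝ) * θ p.1)⁻¹ else 0)
    (u v : κ → ℝ) :
    (1 - γ * lam / Fintype.card ι) * ((A *ᵥ u - b) ⬝ᵥ (A *ᵥ u - b))
        - γ * lam / Fintype.card ι * ((A *ᵥ v - b) ⬝ᵥ (A *ᵥ v - b)) ≤
      ∑ p, π p * ((A *ᵥ asyrkStep A b θ γ u v p - b) ⬝ᵥ (A *ᵥ asyrkStep A b θ γ u v p - b)) := by
  set r := A *ᵥ u - b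
  set s := A *ᵥ v - b
  have hcross : 2 * ((Aᵀ *ᵥ s) ⬝ᵥ (Aᵀ *ᵥ r)) ≤ lam * (s ⬝ᵥ s) + lam * (r ⬝ᵥ r) := by
    have := dotProduct_self_star_nonneg (Aᵀ *ᵥ s - Aᵀ *ᵥ r)
    simp only [star_trivial, sub_dotProduct, dotProduct_sub, dotProduct_comm (Aᵀ *ᵥ r)] at this
    have hlam0 := nonneg_of_mem_transpose_mul_self_eigenvalues hlam.1
    linarith [transpose_mulVec_dotProduct_self_le hlam0 hlam.2 s,
      transpose_mulVec_dotProduct_self_le hlam0 hlam.2 r]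
  have hγm : 0 ≤ γ / Fintype.card ι := by positivity
  calc (1 - γ * lam / Fintype.card ι) * (r ⬝ᵥ r) - γ * lam / Fintype.card ι * (s ⬝ᵥ s)
      ≤ r ⬝ᵥ r - 2 * (γ / Fintype.card ι * ((Aᵀ *ᵥ s) ⬝ᵥ (Aᵀ *ᵥ r))) := by
        linear_combination mul_le_mul_of_nonneg_left hcross hγm
    _ = ∑ p, π p * (r ⬝ᵥ r - 2 * asyrkStepSize A b θ γ v p * (Aᵀ *ᵥ r) p.2) := by
        simp only [mul_sub, sum_sub_distrib, ← sum_mul, hπ1, one_mul]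
        rw [← sum_mul_asyrkStepSize_mul hθ hπ, mul_sum]
        exact congrArg _ (sum_congr rfl fun p _ => by ring)
    _ ≤ _ := sum_le_sum fun p _ => mul_le_mul_of_nonneg_left
        (by rw [mulVec_asyrkStep_sub]; exact dotProduct_sub_smul_self_ge _ _ _) (hπ0 p)

end AsyRK

theorem integral_comp_eq_integral_sum_of_indepFun {Ω α β : Type*} [MeasurableSpace Ω]
    {P : Measure Ω} [IsProbabilityMeasure P]
    [Finite α] [MeasurableSpace α] [MeasurableSingletonClass α]
    [Fintype β] [MeasurableSpace β] [MeasurableSingletonClass β]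
    {Y : Ω → α} {W : Ω → β} (hY : Measurable Y) (hW : Measurable W) (hYW : IndepFun Y W P)
    (h : α → β → ℝ) :
    ∫ ω, h (Y ω) (W ω) ∂P = ∫ ω, ∑ p, P.real {ω | W ω = p} * h (Y ω) p ∂P := by
  have hmap := (indepFun_iff_map_prod_eq_prod_map_map hY.aemeasurable hW.aemeasurable).mp hYW
  calc ∫ ω, h (Y ω) (W ω) ∂P
      = ∫ q, Function.uncurry h q ∂((P.map Y).prod (P.map W)) := by
        rw [← hmap, integral_map (hY.prodMk hW).aemeasurable
          Measurable.of_discrete.aestronglyMeasurable]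
        rfl
    _ = ∫ y, ∑ p, P.real {ω | W ω = p} * h y p ∂(P.map Y) := by
        rw [integral_prod _ Integrable.of_finite]
        refine integral_congr_ae (Filter.Eventually.of_forall fun y => ?_)
        simp only [Function.uncurry_apply_pair]
        rw [integral_fintype Integrable.of_finite]
        simp [map_measureReal_apply hW (measurableSet_singleton _), Set.preimage]
    _ = ∫ ω, ∑ p, P.real {ω | W ω = p} * h (Y ω) p ∂P :=
        integral_map hY.aemeasurable Measurable.of_discrete.aestronglyMeasurable

theorem ProbabilityTheory.iIndepFun.indepFun_prefix {Ω β : Type*} [MeasurableSpace Ω] {P : Measure Ω}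
    [MeasurableSpace β] {Z : ℕ → Ω → β} (hZ : iIndepFun Z P) (hZmeas : ∀ j, Measurable (Z j))
    (j : ℕ) : IndepFun (fun ω (i : range j) => Z i ω) (Z j) P :=
  (hZ.indepFun_finset (range j) {j} (by simp) hZmeas).comp measurable_id
    (measurable_pi_apply (⟨j, mem_singleton_self j⟩ : ({j} : Finset ℕ)))

theorem factorsThrough_prefix_of_delayed_recursion {Ω E β : Type*} {Z : ℕ → Ω → β}
    {x : ℕ → Ω → E} {k : ℕ → ℕ} (F : E → E → β → E) (hk : ∀ j, k j ≤ j)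
    (hx0 : ∀ ω ω', x 0 ω = x 0 ω')
    (hrec : ∀ j ω, x (j + 1) ω = F (x j ω) (x (k j) ω) (Z j ω)) {J j : ℕ} (hJ : J ≤ j) :
    Function.FactorsThrough (x J) (fun ω (i : range j) => Z i ω) := by
  have key : ∀ J ω ω', (∀ i < J, Z i ω = Z i ω') → x J ω = x J ω' := by
    intro J
    induction J using Nat.strong_induction_on with
    | _ J ih =>
      intro ω ω' h
      cases J with
      | zero => exact hx0 ω ω'
      | succ J =>
        have hkJ := hk J
        rw [hrec, hrec, ih J (by omega) ω ω' fun i hi => h i (by omega),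
          ih (k J) (by omega) ω ω' fun i hi => h i (by omega), h J (by omega)]
  exact fun ω ω' h => key J ω ω' fun i hi => congrFun h ⟨i, mem_range.2 (by omega)⟩

theorem le_integral_residual_asyrkStep {ι κ Ω α : Type*} [Fintype ι] [Fintype κ] [DecidableEq κ]
    [MeasurableSpace ι] [MeasurableSingletonClass ι] [MeasurableSpace κ] [MeasurableSingletonClass κ]
    [MeasurableSpace Ω] {P : Measure Ω} [IsProbabilityMeasure P]
    [Finite α] [MeasurableSpace α] [MeasurableSingletonClass α]
    {A : Matrix ι κ ℝ} {b : ι → ℝ} {θ : ι → ℕ} {γ lam : ℝ} (hγ : 0 ≤ γ)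
    (hlam : IsGreatest {μ | ∃ v : κ → ℝ, v ≠ 0 ∧ (Aᵀ * A) *ᵥ v = μ • v} lam)
    (hθ : ∀ i, θ i = #{t | A i t ≠ 0})
    {Y : Ω → α} {W : Ω → ι × κ} (hY : Measurable Y) (hW : Measurable W) (hYW : IndepFun Y W P)
    (hWdist : ∀ p, P {ω | W ω = p} =
      if A p.1 p.2 ≠ 0 then ((Fintype.card ι : ENNReal) * (θ p.1 : ENNReal))⁻¹ else 0)
    (u v : α → κ → ℝ) :
    (1 - γ * lam / Fintype.card ι) * ∫ ω, (A *ᵥ u (Y ω) - b) ⬝ᵥ (A *ᵥ u (Y ω) - b) ∂P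
        - γ * lam / Fintype.card ι * ∫ ω, (A *ᵥ v (Y ω) - b) ⬝ᵥ (A *ᵥ v (Y ω) - b) ∂P ≤
      ∫ ω, (A *ᵥ asyrkStep A b θ γ (u (Y ω)) (v (Y ω)) (W ω) - b)
        ⬝ᵥ (A *ᵥ asyrkStep A b θ γ (u (Y ω)) (v (Y ω)) (W ω) - b) ∂P := by
  have hπ : ∀ p, P.real {ω | W ω = p} =
      if A p.1 p.2 ≠ 0 then ((Fintype.card ι : ℝ) * θ p.1)⁻¹ else 0 := fun p => by
    rw [measureReal_def, hWdist]
    split_ifs <;> simp [ENNReal.toReal_inv]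
  have hπ1 : ∑ p, P.real {ω | W ω = p} = 1 :=
    (sum_measureReal_preimage_singleton univ
      fun p _ => hW (measurableSet_singleton p)).trans (by simp)
  set R : (κ → ℝ) → ℝ := fun y => (A *ᵥ y - b) ⬝ᵥ (A *ᵥ y - b)
  set c := γ * lam / Fintype.card ι
  have hint : ∀ g : α → ℝ, Integrable (g ∘ Y) P := fun g => Integrable.of_finite.comp_measurable hY
  calc (1 - c) * ∫ ω, R (u (Y ω)) ∂P - c * ∫ ω, R (v (Y ω)) ∂P
      = ∫ ω, ((1 - c) * R (u (Y ω)) - c * R (v (Y ω))) ∂P := by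
        rw [← integral_const_mul, ← integral_const_mul]
        exact (integral_sub ((hint (R ∘ u)).const_mul _) ((hint (R ∘ v)).const_mul _)).symm
    _ ≤ ∫ ω, ∑ p, P.real {ω | W ω = p} * R (asyrkStep A b θ γ (u (Y ω)) (v (Y ω)) p) ∂P :=
        integral_mono ((hint (R ∘ u)).const_mul _ |>.sub ((hint (R ∘ v)).const_mul _))
          (hint fun y => ∑ p, P.real {ω | W ω = p} * R (asyrkStep A b θ γ (u y) (v y) p))
          fun ω => le_sum_mul_asyrkStep hγ hlam hθ (fun _ => measureReal_nonneg) hπ1 hπ _ _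
    _ = ∫ ω, R (asyrkStep A b θ γ (u (Y ω)) (v (Y ω)) (W ω)) ∂P :=
        (integral_comp_eq_integral_sum_of_indepFun hY hW hYW
          fun y p => R (asyrkStep A b θ γ (u y) (v y) p)).symm

theorem stmt11_general
    {m n : ℕ}
    (A : Matrix (Fin m) (Fin n) ℝ) (b : Fin m → ℝ)
    (θ : Fin m → ℕ)
    (hθ : ∀ i, θ i = (Finset.univ.filter (fun t => A i t ≠ 0)).card)
    (lammax : ℝ)
    (hlammax : IsGreatest
      {c : ℝ | ∃ v : Fin n → ℝ, v ≠ 0 ∧ (Aᵀ * A).mulVec v = c • v} lammax)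
    (τ : ℕ)
    (k : ℕ → ℕ) (hk : ∀ j, j - τ ≤ k j ∧ k j ≤ j)
    (γ : ℝ) (hγ : 0 < γ)
    {Ω : Type*} [MeasurableSpace Ω] (P : Measure Ω) [IsProbabilityMeasure P]
    (Z : ℕ → Ω → Fin m × Fin n)
    (hZmeas : ∀ j, Measurable (Z j))
    (hZindep : iIndepFun Z P)
    (hZdist : ∀ j (p : Fin m × Fin n),
      P {ω | Z j ω = p} =
        if A p.1 p.2 ≠ 0 then ((m : ENNReal) * (θ p.1 : ENNReal))⁻¹ else 0)
    (x0 : Fin n → ℝ)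
    (x : ℕ → Ω → Fin n → ℝ)
    (hx0 : ∀ ω, x 0 ω = x0)
    (hrec : ∀ j ω s, x (j + 1) ω s = x j ω s -
      (if s = (Z j ω).2 then
        γ * (θ (Z j ω).1 : ℝ) * A (Z j ω).1 (Z j ω).2 *
          ((∑ t, A (Z j ω).1 t * x (k j) ω t) - b (Z j ω).1)
       else 0))
    (j : ℕ) :
    (1 - γ * lammax / m) * (∫ ω, ∑ s, (A.mulVec (x j ω) s - b s) ^ 2 ∂P) - γ * lammax / m * (∫ ω, ∑ s, (A.mulVec (x (k j) ω) s - b s) ^ 2 ∂P)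
      ≤ (∫ ω, ∑ s, (A.mulVec (x (j + 1) ω) s - b s) ^ 2 ∂P) := by
  have hstep : ∀ J ω, x (J + 1) ω = asyrkStep A b θ γ (x J ω) (x (k J) ω) (Z J ω) := fun J ω =>
    funext fun s => by simp [hrec, asyrkStep, asyrkStepSize, Pi.single_apply, dotProduct]
  set Y : Ω → (range j → Fin m × Fin n) := fun ω i => Z i ω
  have hY : Measurable Y := measurable_pi_lambda _ fun i => hZmeas i
  have hfac {J} (hJ : J ≤ j) : Function.FactorsThrough (x J) Y :=
    factorsThrough_prefix_of_delayed_recursion _ (fun J => (hk J).2)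
      (fun ω ω' => by rw [hx0, hx0]) hstep hJ
  set u := Function.extend Y (x j) 0
  set v := Function.extend Y (x (k j)) 0
  have hxj : ∀ ω, x j ω = u (Y ω) := fun ω => ((hfac le_rfl).extend_apply 0 ω).symm
  have hxk : ∀ ω, x (k j) ω = v (Y ω) := fun ω => ((hfac (hk j).2).extend_apply 0 ω).symm
  have hR : ∀ y, ∑ s, (A.mulVec y s - b s) ^ 2 = (A *ᵥ y - b) ⬝ᵥ (A *ᵥ y - b) :=
    fun y => by simp [dotProduct, sq]
  simp only [hR, hstep, hxj, hxk]
  simpa only [Fintype.card_fin] using le_integral_residual_asyrkStep hγ.le hlammax hθ hY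
    (hZmeas j) (hZindep.indepFun_prefix hZmeas j) (by simpa using hZdist j) u v

theorem stmt11
    {m n : ℕ} (hm : 0 < m) (hn : 0 < n)
    (A : Matrix (Fin m) (Fin n) ℝ) (b : Fin m → ℝ)
    (hconsistent : ∃ z : Fin n → ℝ, A.mulVec z = b)
    (hrows : ∀ i, ∑ t, (A i t) ^ 2 = 1)
    (θ : Fin m → ℕ)
    (hθ : ∀ i, θ i = (Finset.univ.filter (fun t => A i t ≠ 0)).card)
    (lammax : ℝ)
    (hlammax : IsGreatest
      {c : ℝ | ∃ v : Fin n → ℝ, v ≠ 0 ∧ (Aᵀ * A).mulVec v = c • v} lammax)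
    (τ : ℕ) (hτ : 1 ≤ τ)
    (k : ℕ → ℕ) (hk : ∀ j, j - τ ≤ k j ∧ k j ≤ j)
    (γ : ℝ) (hγ : 0 < γ)
    {Ω : Type*} [MeasurableSpace Ω] (P : Measure Ω) [IsProbabilityMeasure P]
    (Z : ℕ → Ω → Fin m × Fin n)
    (hZmeas : ∀ j, Measurable (Z j))
    (hZindep : iIndepFun Z P)
    (hZdist : ∀ j (p : Fin m × Fin n),
      P {ω | Z j ω = p} =
        if A p.1 p.2 ≠ 0 then ((m : ENNReal) * (θ p.1 : ENNReal))⁻¹ else 0)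
    (x0 : Fin n → ℝ)
    (x : ℕ → Ω → Fin n → ℝ)
    (hx0 : ∀ ω, x 0 ω = x0)
    (hrec : ∀ j ω s, x (j + 1) ω s = x j ω s -
      (if s = (Z j ω).2 then
        γ * (θ (Z j ω).1 : ℝ) * A (Z j ω).1 (Z j ω).2 *
          ((∑ t, A (Z j ω).1 t * x (k j) ω t) - b (Z j ω).1)
       else 0))
    (j : ℕ) :
    (1 - γ * lammax / m) * (∫ ω, ∑ s, (A.mulVec (x j ω) s - b s) ^ 2 ∂P) - γ * lammax / m * (∫ ω, ∑ s, (A.mulVec (x (k j) ω) s - b s) ^ 2 ∂P)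
      ≤ (∫ ω, ∑ s, (A.mulVec (x (j + 1) ω) s - b s) ^ 2 ∂P) :=
  stmt11_general A b θ hθ lammax hlammax τ k hk γ hγ P Z hZmeas hZindep hZdist x0 x hx0 hrec j
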